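/- Let U : ℂ → ℝ and let ψ₁, ψ₂ : ℂ → ℂ be continuously ℝ-differentiable functions satisfying the Dirac equation ∂ψ₂ = −U·ψ₁ and ∂̄ψ₁ = U·ψ₂. Then the following three identities hold everywhere: (i) ∂̄(conj(ψ₂)² + ψ₁²) + ∂(conj(ψ₁)² + ψ₂²) = 0; (ii) ∂̄(conj(ψ₂)² − ψ₁²) + ∂(conj(ψ₁)² − ψ₂²) = 0; (iii) ∂̄(ψ₁·conj(ψ₂)) = ∂(conj(ψ₁)·ψ₂). Consequently the three 1-forms occurring in the Weierstrass representation formulas (15), namely (conj(ψ₂)²+ψ₁²)dz − (conj(ψ₁)²+ψ₂²)dz̄, (conj(ψ₂)²−ψ₁²)dz − (conj(ψ₁)²−ψ₂²)dz̄, and ψ₁conj(ψ₂)dz + conj(ψ₁)ψ₂dz̄, are closed. -/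

import Mathlib

/-!
The Wirtinger derivatives obey the sum, product and conjugation rules `∂ conj f = conj (∂̄ f)`.
Conjugating the Dirac equation therefore gives `∂̄ conj ψ₂ = −U·conj ψ₁` and
`∂ conj ψ₁ = U·conj ψ₂`, using that `U` is real. Expanding each identity with the product rule
leaves only terms of the form `U·ψ₁·ψ₂`, `U·conj ψ₁·conj ψ₂` and `U·|ψ|²`, and these cancel.
-/

/-- The Wirtinger derivative `∂f(z) = ½(D₁f(z) − i·Dᵢf(z))`. -/
noncomputable def wd (f : ℂ → ℂ) (z : ℂ) : ℂ :=
  (1 / 2) * (fderiv ℝ f z 1 - Complex.I * fderiv ℝ f z Complex.I)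

/-- The conjugate Wirtinger derivative `∂̄f(z) = ½(D₁f(z) + i·Dᵢf(z))`. -/
noncomputable def wdbar (f : ℂ → ℂ) (z : ℂ) : ℂ :=
  (1 / 2) * (fderiv ℝ f z 1 + Complex.I * fderiv ℝ f z Complex.I)

section Wirtinger

variable {f g : ℂ → ℂ} {z : ℂ}

lemma fderiv_conj_apply (hf : DifferentiableAt ℝ f z) (v : ℂ) :
    fderiv ℝ (fun w => starRingEnd ℂ (f w)) z v = starRingEnd ℂ (fderiv ℝ f z v) := by
  change fderiv ℝ (Complex.conjCLE ∘ f) z v = _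
  rw [fderiv_comp z Complex.conjCLE.differentiableAt hf, Complex.conjCLE.fderiv]
  rfl

lemma wd_conj (hf : DifferentiableAt ℝ f z) :
    wd (fun w => starRingEnd ℂ (f w)) z = starRingEnd ℂ (wdbar f z) := by
  simp only [wd, wdbar, fderiv_conj_apply hf, map_mul, map_add, Complex.conj_I,
    map_div₀, map_one, map_ofNat]
  ring

lemma wdbar_conj (hf : DifferentiableAt ℝ f z) :
    wdbar (fun w => starRingEnd ℂ (f w)) z = starRingEnd ℂ (wd f z) := by
  simp only [wd, wdbar, fderiv_conj_apply hf, map_mul, map_sub, Complex.conj_I,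
    map_div₀, map_one, map_ofNat]
  ring

lemma wd_add (hf : DifferentiableAt ℝ f z) (hg : DifferentiableAt ℝ g z) :
    wd (fun w => f w + g w) z = wd f z + wd g z := by
  simp only [wd, fderiv_fun_add hf hg, add_apply]
  ring

lemma wdbar_add (hf : DifferentiableAt ℝ f z) (hg : DifferentiableAt ℝ g z) :
    wdbar (fun w => f w + g w) z = wdbar f z + wdbar g z := by
  simp only [wdbar, fderiv_fun_add hf hg, add_apply]
  ring

lemma wd_sub (hf : DifferentiableAt ℝ f z) (hg : DifferentiableAt ℝ g z) :
    wd (fun w => f w - g w) z = wd f z - wd g z := by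
  simp only [wd, fderiv_fun_sub hf hg, sub_apply]
  ring

lemma wdbar_sub (hf : DifferentiableAt ℝ f z) (hg : DifferentiableAt ℝ g z) :
    wdbar (fun w => f w - g w) z = wdbar f z - wdbar g z := by
  simp only [wdbar, fderiv_fun_sub hf hg, sub_apply]
  ring

lemma wd_mul (hf : DifferentiableAt ℝ f z) (hg : DifferentiableAt ℝ g z) :
    wd (fun w => f w * g w) z = f z * wd g z + g z * wd f z := by
  simp only [wd, fderiv_fun_mul hf hg, add_apply,
    smul_apply, smul_eq_mul]
  ring

lemma wdbar_mul (hf : DifferentiableAt ℝ f z) (hg : DifferentiableAt ℝ g z) :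
    wdbar (fun w => f w * g w) z = f z * wdbar g z + g z * wdbar f z := by
  simp only [wdbar, fderiv_fun_mul hf hg, add_apply,
    smul_apply, smul_eq_mul]
  ring

lemma wd_sq (hf : DifferentiableAt ℝ f z) :
    wd (fun w => f w ^ 2) z = 2 * f z * wd f z := by
  simp only [sq, wd_mul hf hf]
  ring

lemma wdbar_sq (hf : DifferentiableAt ℝ f z) :
    wdbar (fun w => f w ^ 2) z = 2 * f z * wdbar f z := by
  simp only [sq, wdbar_mul hf hf]
  ring

end Wirtinger

/-- If `(ψ₁, ψ₂)` solves the Dirac equation `∂ψ₂ = −U·ψ₁`, `∂̄ψ₁ = U·ψ₂` with a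
real-valued potential `U`, then the three identities
(i) `∂̄(conj(ψ₂)² + ψ₁²) + ∂(conj(ψ₁)² + ψ₂²) = 0`,
(ii) `∂̄(conj(ψ₂)² − ψ₁²) + ∂(conj(ψ₁)² − ψ₂²) = 0`,
(iii) `∂̄(ψ₁·conj(ψ₂)) = ∂(conj(ψ₁)·ψ₂)`
hold everywhere; i.e. the three 1-forms in the Weierstrass representation (15) are closed. -/
theorem weierstrass_forms_closed
    (U : ℂ → ℝ) (ψ₁ ψ₂ : ℂ → ℂ)
    (hψ₁ : ContDiff ℝ 1 ψ₁) (hψ₂ : ContDiff ℝ 1 ψ₂)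
    (hD1 : ∀ z, wd ψ₂ z = -(U z : ℂ) * ψ₁ z)
    (hD2 : ∀ z, wdbar ψ₁ z = (U z : ℂ) * ψ₂ z) :
    (∀ z, wdbar (fun w => (starRingEnd ℂ (ψ₂ w)) ^ 2 + (ψ₁ w) ^ 2) z
        + wd (fun w => (starRingEnd ℂ (ψ₁ w)) ^ 2 + (ψ₂ w) ^ 2) z = 0) ∧
    (∀ z, wdbar (fun w => (starRingEnd ℂ (ψ₂ w)) ^ 2 - (ψ₁ w) ^ 2) z
        + wd (fun w => (starRingEnd ℂ (ψ₁ w)) ^ 2 - (ψ₂ w) ^ 2) z = 0) ∧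
    (∀ z, wdbar (fun w => ψ₁ w * starRingEnd ℂ (ψ₂ w)) z
        = wd (fun w => starRingEnd ℂ (ψ₁ w) * ψ₂ w) z) := by
  have d₁ : Differentiable ℝ ψ₁ := hψ₁.differentiable one_ne_zero
  have d₂ : Differentiable ℝ ψ₂ := hψ₂.differentiable one_ne_zero
  have c₁ : Differentiable ℝ (fun w => starRingEnd ℂ (ψ₁ w)) :=
    Complex.conjCLE.differentiable.comp d₁
  have c₂ : Differentiable ℝ (fun w => starRingEnd ℂ (ψ₂ w)) :=
    Complex.conjCLE.differentiable.comp d₂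
  have hD1_conj : ∀ z, wdbar (fun w => starRingEnd ℂ (ψ₂ w)) z
      = -(U z : ℂ) * starRingEnd ℂ (ψ₁ z) := fun z => by
    rw [wdbar_conj (d₂ z), hD1, map_mul, map_neg, Complex.conj_ofReal]
  have hD2_conj : ∀ z, wd (fun w => starRingEnd ℂ (ψ₁ w)) z
      = (U z : ℂ) * starRingEnd ℂ (ψ₂ z) := fun z => by
    rw [wd_conj (d₁ z), hD2, map_mul, Complex.conj_ofReal]
  refine ⟨fun z => ?_, fun z => ?_, fun z => ?_⟩
  · rw [wdbar_add ((c₂ z).fun_pow 2) ((d₁ z).fun_pow 2),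
      wd_add ((c₁ z).fun_pow 2) ((d₂ z).fun_pow 2),
      wdbar_sq (c₂ z), wdbar_sq (d₁ z), wd_sq (c₁ z), wd_sq (d₂ z),
      hD1_conj, hD2_conj, hD1, hD2]
    ring
  · rw [wdbar_sub ((c₂ z).fun_pow 2) ((d₁ z).fun_pow 2),
      wd_sub ((c₁ z).fun_pow 2) ((d₂ z).fun_pow 2),
      wdbar_sq (c₂ z), wdbar_sq (d₁ z), wd_sq (c₁ z), wd_sq (d₂ z),
      hD1_conj, hD2_conj, hD1, hD2]
    ring
  · rw [wdbar_mul (d₁ z) (c₂ z), wd_mul (c₁ z) (d₂ z), hD1_conj, hD2_conj, hD1, hD2]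
    ring
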